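/- Let m ≥ 1, let c > 0, let D be a finitely supported probability distribution over valuations on m items, let p be an item pricing, and fix a selection rule A. Define L = {j ∈ Fin m : p_j > 8m²c} and the item pricing q by q_j = p_j / 2 for j ∈ L and q_j = max{p_j, 2mc} for j ∉ L. Then q_j ≥ 2mc for every item j, and E_{v∼D}[ Rev(v|Fin m, q) ] ≥ (1/4) · E_{v∼D}[ p( A(v, p, Fin m) ∩ L ) ]. -/

import Mathlib

open Finset

/-- The total price of a bundle of items under an item pricing `p`. -/
def priceOf {m : ℕ} (p : Fin m → ℝ) (T : Finset (Fin m)) : ℝ := ∑ j ∈ T, p j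

/-- A valuation assigns `0` to the empty set and is nonnegative. -/
def IsValuation {m : ℕ} (v : Finset (Fin m) → ℝ) : Prop :=
  v ∅ = 0 ∧ ∀ T, 0 ≤ v T

/-- `T` is a demanded bundle for valuation `v` at pricing `q` with available set `S`:
it maximizes utility `v(T) - q(T)` among subsets of `S`. -/
def IsDemanded {m : ℕ} (v : Finset (Fin m) → ℝ) (q : Fin m → ℝ)
    (S T : Finset (Fin m)) : Prop :=
  T ⊆ S ∧ ∀ T' ⊆ S, v T' - priceOf q T' ≤ v T - priceOf q T

/-- The revenue `Rev(v|S, q)`: the maximum price of a demanded bundle (the buyer breaks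
ties in favor of a most expensive demanded bundle). -/
noncomputable def BRev {m : ℕ} (v : Finset (Fin m) → ℝ) (q : Fin m → ℝ)
    (S : Finset (Fin m)) : ℝ :=
  sSup {r : ℝ | ∃ T, IsDemanded v q S T ∧ r = priceOf q T}

/-- A selection rule assigns to every triple `(v, q, S)` a demanded bundle whose price
realizes `Rev(v|S, q)`. -/
def IsSelRule {m : ℕ}
    (A : (Finset (Fin m) → ℝ) → (Fin m → ℝ) → Finset (Fin m) → Finset (Fin m)) : Prop :=
  ∀ v q S, IsDemanded v q S (A v q S) ∧ priceOf q (A v q S) = BRev v q S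

/-- A finitely supported probability distribution, given by a finite list of atoms. -/
structure FinDist (α : Type*) where
  card : ℕ
  val : Fin card → α
  prob : Fin card → ℝ
  prob_nonneg : ∀ i, 0 ≤ prob i
  prob_sum : ∑ i : Fin card, prob i = 1
/-!
Let `Tp` be demanded at `p` and `Tq` at `q`. Comparing the two utility maximizations gives
`(p - q)(Tp) ≤ (p - q)(Tq)`, and `p ≤ 2q` bounds the right side by `q(Tq)`. On the left, items of
`L` contribute `p(Tp ∩ L) / 2`, while each of the at most `m` other items loses at most `2mc`.
So `q(Tq) ≥ p(Tp ∩ L) / 2 - 2m²c`, and `2m²c` is at most a quarter of `p(Tp ∩ L)` as soon as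
`Tp` meets `L`, because then `p(Tp ∩ L) > 8m²c`.
-/

lemma priceOf_sub {m : ℕ} (p q : Fin m → ℝ) (T : Finset (Fin m)) :
    priceOf (p - q) T = priceOf p T - priceOf q T :=
  Finset.sum_sub_distrib _ _

lemma priceOf_nonneg {m : ℕ} {p : Fin m → ℝ} (hp : ∀ j, 0 ≤ p j) (T : Finset (Fin m)) :
    0 ≤ priceOf p T :=
  Finset.sum_nonneg fun j _ => hp j

lemma IsDemanded.priceOf_sub_le {m : ℕ} {v : Finset (Fin m) → ℝ} {p q : Fin m → ℝ}
    {S Tp Tq : Finset (Fin m)} (hTp : IsDemanded v p S Tp) (hTq : IsDemanded v q S Tq) :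
    priceOf (p - q) Tp ≤ priceOf (p - q) Tq := by
  have hp := hTp.2 Tq hTq.1
  have hq := hTq.2 Tp hTp.1
  rw [priceOf_sub, priceOf_sub]
  linarith

section Recovery

variable {m : ℕ} {c : ℝ} {p q : Fin m → ℝ} {L : Finset (Fin m)}

lemma two_mul_mul_le_recovery (hc : 0 < c)
    (hL : ∀ j, j ∈ L ↔ 8 * (m : ℝ) ^ 2 * c < p j)
    (hq : ∀ j, q j = if j ∈ L then p j / 2 else max (p j) (2 * (m : ℝ) * c)) (j : Fin m) :
    2 * (m : ℝ) * c ≤ q j := by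
  rw [hq j]
  split_ifs with hj
  · have hm : (1 : ℝ) ≤ m := by exact_mod_cast j.pos
    have hpj := (hL j).1 hj
    nlinarith [mul_le_mul_of_nonneg_right hm (by positivity : (0 : ℝ) ≤ m * c)]
  · exact le_max_right _ _

lemma le_two_mul_recovery (hp : ∀ j, 0 ≤ p j)
    (hq : ∀ j, q j = if j ∈ L then p j / 2 else max (p j) (2 * (m : ℝ) * c)) (j : Fin m) :
    p j ≤ 2 * q j := by
  rw [hq j]
  split_ifs
  · linarith
  · linarith [hp j, le_max_left (p j) (2 * (m : ℝ) * c)]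

lemma priceOf_sub_recovery_le (hp : ∀ j, 0 ≤ p j)
    (hq : ∀ j, q j = if j ∈ L then p j / 2 else max (p j) (2 * (m : ℝ) * c))
    (T : Finset (Fin m)) :
    priceOf (p - q) T ≤ priceOf q T := by
  refine Finset.sum_le_sum fun j _ => ?_
  have := le_two_mul_recovery hp hq j
  simp only [Pi.sub_apply]
  linarith

lemma half_priceOf_inter_sub_le (hc : 0 < c) (hp : ∀ j, 0 ≤ p j)
    (hq : ∀ j, q j = if j ∈ L then p j / 2 else max (p j) (2 * (m : ℝ) * c))
    (T : Finset (Fin m)) :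
    priceOf p (T ∩ L) / 2 - 2 * (m : ℝ) ^ 2 * c ≤ priceOf (p - q) T := by
  have hin : priceOf (p - q) (T ∩ L) = priceOf p (T ∩ L) / 2 := by
    rw [priceOf, priceOf, Finset.sum_div]
    refine Finset.sum_congr rfl fun j hj => ?_
    rw [Pi.sub_apply, hq j, if_pos (Finset.mem_inter.1 hj).2]
    ring
  have hloss : ∀ j ∈ T \ L, -(2 * (m : ℝ) * c) ≤ (p - q) j := by
    intro j hj
    rw [Pi.sub_apply, hq j, if_neg (Finset.mem_sdiff.1 hj).2]
    rcases max_cases (p j) (2 * (m : ℝ) * c) with ⟨h, _⟩ | ⟨h, _⟩ <;> rw [h]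
    · linarith [show (0 : ℝ) ≤ 2 * m * c by positivity]
    · linarith [hp j]
  have hcard : ((T \ L).card : ℝ) ≤ m := by
    exact_mod_cast (Finset.card_le_univ (T \ L)).trans_eq (Fintype.card_fin m)
  have hout : -(2 * (m : ℝ) ^ 2 * c) ≤ priceOf (p - q) (T \ L) :=
    calc -(2 * (m : ℝ) ^ 2 * c) = m * -(2 * (m : ℝ) * c) := by ring
      _ ≤ (T \ L).card * -(2 * (m : ℝ) * c) :=
          mul_le_mul_of_nonpos_right hcard (by simp only [neg_nonpos]; positivity)
      _ ≤ priceOf (p - q) (T \ L) := by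
          simpa only [priceOf, nsmul_eq_mul] using Finset.card_nsmul_le_sum _ _ _ hloss
  have hsplit := Finset.sum_inter_add_sum_sdiff T L (p - q)
  rw [← priceOf, ← priceOf, ← priceOf] at hsplit
  linarith

lemma quarter_priceOf_inter_le_priceOf (hc : 0 < c) (hp : ∀ j, 0 ≤ p j)
    (hL : ∀ j, j ∈ L ↔ 8 * (m : ℝ) ^ 2 * c < p j)
    (hq : ∀ j, q j = if j ∈ L then p j / 2 else max (p j) (2 * (m : ℝ) * c))
    {v : Finset (Fin m) → ℝ} {S Tp Tq : Finset (Fin m)}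
    (hTp : IsDemanded v p S Tp) (hTq : IsDemanded v q S Tq) :
    1 / 4 * priceOf p (Tp ∩ L) ≤ priceOf q Tq := by
  obtain hempty | ⟨j, hj⟩ := (Tp ∩ L).eq_empty_or_nonempty
  · rw [hempty, priceOf, Finset.sum_empty, mul_zero]
    exact priceOf_nonneg (fun j => (two_mul_mul_le_recovery hc hL hq j).trans' (by positivity)) Tq
  have hlarge : 8 * (m : ℝ) ^ 2 * c < priceOf p (Tp ∩ L) :=
    ((hL j).1 (Finset.mem_inter.1 hj).2).trans_le (Finset.single_le_sum (fun j _ => hp j) hj)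
  have := half_priceOf_inter_sub_le hc hp hq Tp
  have := hTp.priceOf_sub_le hTq
  have := priceOf_sub_recovery_le hp hq Tq
  linarith

end Recovery

theorem high_price_recovery_general
    (m : ℕ) (c : ℝ) (hc : 0 < c)
    (D : FinDist (Finset (Fin m) → ℝ))
    (p : Fin m → ℝ) (hp : ∀ j, 0 ≤ p j)
    (A : (Finset (Fin m) → ℝ) → (Fin m → ℝ) → Finset (Fin m) → Finset (Fin m))
    (hA : IsSelRule A)
    (L : Finset (Fin m)) (hL : ∀ j, j ∈ L ↔ 8 * (m : ℝ) ^ 2 * c < p j)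
    (q : Fin m → ℝ)
    (hq : ∀ j, q j = if j ∈ L then p j / 2 else max (p j) (2 * (m : ℝ) * c)) :
    (∀ j, 2 * (m : ℝ) * c ≤ q j) ∧
      (1 / 4) * ∑ a, D.prob a * priceOf p (A (D.val a) p Finset.univ ∩ L) ≤
        ∑ a, D.prob a * BRev (D.val a) q Finset.univ := by
  refine ⟨two_mul_mul_le_recovery hc hL hq, ?_⟩
  rw [Finset.mul_sum]
  refine Finset.sum_le_sum fun a _ => ?_
  rw [mul_left_comm, ← (hA (D.val a) q Finset.univ).2]
  exact mul_le_mul_of_nonneg_left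
    (quarter_priceOf_inter_le_priceOf hc hp hL hq (hA _ p _).1 (hA _ q _).1) (D.prob_nonneg a)

/-- The high-price recovery pricing: halving the prices of the
high-priced items `L = {j : p_j > 8m²c}` and raising all other prices to at least `2mc`
yields a pricing `q` with every price at least `2mc` whose expected revenue is at least a
quarter of the expected revenue contribution of `L` under `p`. -/
theorem high_price_recovery
    (m : ℕ) (hm : 1 ≤ m) (c : ℝ) (hc : 0 < c)
    (D : FinDist (Finset (Fin m) → ℝ))
    (hD : ∀ a, 0 < D.prob a → IsValuation (D.val a))
    (p : Fin m → ℝ) (hp : ∀ j, 0 ≤ p j)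
    (A : (Finset (Fin m) → ℝ) → (Fin m → ℝ) → Finset (Fin m) → Finset (Fin m))
    (hA : IsSelRule A)
    (L : Finset (Fin m)) (hL : ∀ j, j ∈ L ↔ 8 * (m : ℝ) ^ 2 * c < p j)
    (q : Fin m → ℝ)
    (hq : ∀ j, q j = if j ∈ L then p j / 2 else max (p j) (2 * (m : ℝ) * c)) :
    (∀ j, 2 * (m : ℝ) * c ≤ q j) ∧
      (1 / 4) * ∑ a, D.prob a * priceOf p (A (D.val a) p Finset.univ ∩ L) ≤
        ∑ a, D.prob a * BRev (D.val a) q Finset.univ :=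
  high_price_recovery_general m c hc D p hp A hA L hL q hq
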